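/- arXiv:2104.12917 — 2 statements merged into one kernel-verified Lean document; each statement's English description precedes it below -/
import Mathlib

section
/- Let s, s' be rational numbers with s' ≥ s ≥ 1. Then [𝔟⁻[[t]]_{s'}, 𝔫((t))_s] ⊆ 𝔟⁻[[t]]_{s'} + 𝔫((t))_s; in particular 𝔟⁻[[t]]_{s'} + 𝔫((t))_s is a Lie subalgebra of 𝔤((t)). -/
open HahnSeries

section LoopAlgebra

variable (k : Type*) [Field k]
variable (g : Type*) [LieRing g] [LieAlgebra k g]

/-- `g` viewed as a (nonunital, nonassociative) ring with multiplication the Lie bracket;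
this induces the natural multiplication on `HahnSeries ℤ g = 𝔤((t))` given by
`[a ⊗ f, b ⊗ g] = [a,b] ⊗ fg`. -/
noncomputable instance lieRingAsRing : NonUnitalNonAssocRing g :=
  { (inferInstance : AddCommGroup g) with
    mul := fun a b => ⁅a, b⁆
    left_distrib := fun a b c => lie_add a b c
    right_distrib := fun a b c => add_lie a b c
    zero_mul := fun a => zero_lie a
    mul_zero := fun a => lie_zero a }

variable {Q : Type*} [AddCommGroup Q]

variable {k g}

/-- The Moy–Prasad subspace `𝔨_{x,r}` of the loop algebra `𝔤((t)) = HahnSeries ℤ 𝔤`: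
those `v` each of whose `t^i`-coefficients lies in the span of the root spaces `G α`
with `x α + i ≥ r`. -/
noncomputable def MP (G : Q → Submodule k g) (x : Q →+ ℝ) (r : ℝ) :
    Submodule k (HahnSeries ℤ g) where
  carrier := {v | ∀ i : ℤ, v.coeff i ∈ ⨆ α ∈ {α : Q | r ≤ x α + i}, G α}
  zero_mem' := by intro i; simp
  add_mem' := by
    intro a b ha hb i
    rw [HahnSeries.coeff_add]
    exact add_mem (ha i) (hb i)
  smul_mem' := by
    intro c a ha i
    rw [HahnSeries.coeff_smul]
    exact Submodule.smul_mem _ _ (ha i)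

/-- The Moy–Prasad subspace `𝔨_{x,r+}`, with strict inequality. -/
noncomputable def MPplus (G : Q → Submodule k g) (x : Q →+ ℝ) (r : ℝ) :
    Submodule k (HahnSeries ℤ g) where
  carrier := {v | ∀ i : ℤ, v.coeff i ∈ ⨆ α ∈ {α : Q | r < x α + i}, G α}
  zero_mem' := by intro i; simp
  add_mem' := by
    intro a b ha hb i
    rw [HahnSeries.coeff_add]
    exact add_mem (ha i) (hb i)
  smul_mem' := by
    intro c a ha i
    rw [HahnSeries.coeff_smul]
    exact Submodule.smul_mem _ _ (ha i)

end LoopAlgebra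

section Whittaker

variable {k : Type*} [Field k] {g : Type*} [LieRing g] [LieAlgebra k g]
variable {Q : Type*} [AddCommGroup Q]

/-- The subspace of `𝔤((t)) = HahnSeries ℤ 𝔤` of series whose `t^i`-coefficient lies in the
prescribed subspace `S i` of `𝔤`, for every `i`. -/
noncomputable def coeffSub (S : ℤ → Submodule k g) : Submodule k (HahnSeries ℤ g) where
  carrier := {v | ∀ i : ℤ, v.coeff i ∈ S i}
  zero_mem' := by intro i; simp
  add_mem' := by
    intro a b ha hb i
    rw [HahnSeries.coeff_add]; exact add_mem (ha i) (hb i)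
  smul_mem' := by
    intro c a ha i
    rw [HahnSeries.coeff_smul]; exact Submodule.smul_mem _ _ (ha i)

/-- `𝔫 = ⨁_{α ∈ Φ⁺} 𝔤_α` as a subspace of `𝔤`. -/
noncomputable def nilpos (G : Q → Submodule k g) (Φplus : Finset Q) : Submodule k g :=
  ⨆ α ∈ Φplus, G α

/-- `𝔟⁻ = 𝔥 ⊕ ⨁_{α ∈ −Φ⁺} 𝔤_α` as a subspace of `𝔤` (here `𝔥 = G 0`). -/
noncomputable def borelminus (G : Q → Submodule k g) (Φplus : Finset Q) : Submodule k g :=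
  G 0 ⊔ ⨆ α ∈ Φplus, G (-α)

/-- `𝔫((t))` inside `HahnSeries ℤ 𝔤`. -/
noncomputable def nLoop (G : Q → Submodule k g) (Φplus : Finset Q) :
    Submodule k (HahnSeries ℤ g) :=
  coeffSub fun _ => nilpos G Φplus

/-- `𝔫[[t]]` inside `HahnSeries ℤ 𝔤`. -/
noncomputable def nInt (G : Q → Submodule k g) (Φplus : Finset Q) :
    Submodule k (HahnSeries ℤ g) :=
  coeffSub fun i => if i < 0 then ⊥ else nilpos G Φplus

/-- `𝔟⁻[[t]]` inside `HahnSeries ℤ 𝔤`. -/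
noncomputable def bInt (G : Q → Submodule k g) (Φplus : Finset Q) :
    Submodule k (HahnSeries ℤ g) :=
  coeffSub fun i => if i < 0 then ⊥ else borelminus G Φplus

/-- The additive map `α ↦ s · ht(α) : Q → ℝ`. -/
noncomputable def sht (ht : Q →+ ℤ) (s : ℚ) : Q →+ ℝ where
  toFun α := (s : ℝ) * (ht α : ℝ)
  map_zero' := by simp
  map_add' a b := by push_cast [map_add]; ring

/-- `𝔟⁻[[t]]_s = 𝔨_{s·ht,(s−1)+} ∩ 𝔟⁻[[t]]`. -/
noncomputable def bIntS (G : Q → Submodule k g) (Φplus : Finset Q) (ht : Q →+ ℤ) (s : ℚ) :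
    Submodule k (HahnSeries ℤ g) :=
  MPplus G (sht ht s) ((s : ℝ) - 1) ⊓ bInt G Φplus

/-- `𝔫((t))_s = 𝔨_{s·ht,0} ∩ 𝔫((t))`. -/
noncomputable def nLoopS (G : Q → Submodule k g) (Φplus : Finset Q) (ht : Q →+ ℤ) (s : ℚ) :
    Submodule k (HahnSeries ℤ g) :=
  MP G (sht ht s) 0 ⊓ nLoop G Φplus

end Whittaker

/-!
Each of `𝔟⁻[[t]]_{s'}` and `𝔫((t))_s` consists of the series whose `t^i`-coefficient lies in
`⨁_{α ∈ A i} 𝔤_α` for an explicit set of roots `A i`; directness of the root decomposition turns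
the intersections in their definitions into intersections of index sets, and splitting
coefficients shows that their sum is described by the union of the index sets. As
`[𝔤_α t^i, 𝔤_β t^j] ⊆ 𝔤_{α+β} t^{i+j}`, closure under the bracket becomes a check on heights.
The only interesting case is `α` with `ht α ≤ 0` from `𝔟⁻[[t]]_{s'}` against `β ∈ Φ⁺` from
`𝔫((t))_s`: then `s · ht α ≥ s' · ht α > s' - 1 - i ≥ -i` puts a positive `α + β` into
`𝔫((t))_s`, and `s' · ht β ≥ s · ht β ≥ -j` puts a non-positive one into `𝔟⁻[[t]]_{s'}`.
-/

theorem iSupIndep.biSup_inf_biSup {α ι : Type*} [CompleteLattice α] [IsModularLattice α]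
    [IsCompactlyGenerated α] {f : ι → α} (hf : iSupIndep f) (s t : Set ι) :
    (⨆ i ∈ s, f i) ⊓ (⨆ i ∈ t, f i) = ⨆ i ∈ s ∩ t, f i := by
  have hdisj : Disjoint (⨆ i ∈ s \ t, f i) (⨆ i ∈ t, f i) :=
    hf.disjoint_biSup_biSup Set.disjoint_sdiff_left
  have hle : ⨆ i ∈ s ∩ t, f i ≤ ⨆ i ∈ t, f i := biSup_mono fun _ h => h.2
  rw [← Set.inter_union_sdiff s t, iSup_union, sup_inf_assoc_of_le _ hle, hdisj.eq_bot,
    sup_bot_eq, Set.inter_union_sdiff]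

section CoeffSub

variable {k : Type*} [Field k] {g : Type*} [LieRing g] [LieAlgebra k g]

lemma coeffSub_mono {S T : ℤ → Submodule k g} (h : S ≤ T) : coeffSub S ≤ coeffSub T :=
  fun _ hv i => h i (hv i)

lemma coeffSub_inf (S T : ℤ → Submodule k g) : coeffSub S ⊓ coeffSub T = coeffSub (S ⊓ T) := by
  ext v
  exact forall_and.symm

lemma coeffSub_sup (S T : ℤ → Submodule k g) : coeffSub S ⊔ coeffSub T = coeffSub (S ⊔ T) := by
  refine le_antisymm (sup_le (coeffSub_mono le_sup_left) (coeffSub_mono le_sup_right))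
    fun u hu => ?_
  choose y hy z hz hyz using fun n => Submodule.mem_sup.mp (hu n)
  classical
  -- `y` is cut off outside the support of `u` so that it is again a Laurent series
  let P : HahnSeries ℤ g :=
    ⟨fun n => if u.coeff n = 0 then 0 else y n,
      u.isPWO_support.mono fun n hn h0 => hn (if_pos h0)⟩
  have hP : P ∈ coeffSub S := fun n => by
    change (if u.coeff n = 0 then 0 else y n) ∈ S n
    split_ifs
    exacts [zero_mem _, hy n]
  have hQ : u - P ∈ coeffSub T := fun n => by
    change u.coeff n - (if u.coeff n = 0 then 0 else y n) ∈ T n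
    split_ifs with h0
    · simp [h0]
    · simpa [← hyz n] using hz n
  simpa using Submodule.add_mem_sup hP hQ

lemma mul_mem_coeffSub {S T U : ℤ → Submodule k g}
    (hST : ∀ i j, ∀ a ∈ S i, ∀ b ∈ T j, ⁅a, b⁆ ∈ U (i + j)) {v w : HahnSeries ℤ g}
    (hv : v ∈ coeffSub S) (hw : w ∈ coeffSub T) : v * w ∈ coeffSub U := by
  intro n
  rw [coeff_mul]
  refine Submodule.sum_mem _ fun ij hij => ?_
  rw [← (Finset.mem_antidiagonal.mp hij).2.2]
  exact hST _ _ _ (hv ij.1) _ (hw ij.2)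

end CoeffSub

section Graded

variable {k : Type*} [Field k] {g : Type*} [LieRing g] [LieAlgebra k g]
variable {Q : Type*}

noncomputable def gradedCoeffSub (G : Q → Submodule k g) (A : ℤ → Set Q) :
    Submodule k (HahnSeries ℤ g) :=
  coeffSub fun i => ⨆ α ∈ A i, G α

lemma gradedCoeffSub_inf {G : Q → Submodule k g} (hG : iSupIndep G) (A B : ℤ → Set Q) :
    gradedCoeffSub G A ⊓ gradedCoeffSub G B = gradedCoeffSub G (A ⊓ B) := by
  rw [gradedCoeffSub, gradedCoeffSub, coeffSub_inf]
  congr 1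
  funext i
  exact hG.biSup_inf_biSup (A i) (B i)

lemma gradedCoeffSub_sup (G : Q → Submodule k g) (A B : ℤ → Set Q) :
    gradedCoeffSub G A ⊔ gradedCoeffSub G B = gradedCoeffSub G (A ⊔ B) := by
  rw [gradedCoeffSub, gradedCoeffSub, coeffSub_sup]
  congr 1
  funext i
  exact iSup_union.symm

lemma nLoop_eq_gradedCoeffSub (G : Q → Submodule k g) (Φplus : Finset Q) :
    nLoop G Φplus = gradedCoeffSub G fun _ => {α | α ∈ Φplus} := rfl

variable [AddCommGroup Q]

lemma lie_mem_of_mem_biSup {G : Q → Submodule k g}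
    (hbr : ∀ (α β : Q) (a b : g), a ∈ G α → b ∈ G β → ⁅a, b⁆ ∈ G (α + β))
    {A B : Set Q} {U : Submodule k g} (hAB : ∀ α ∈ A, ∀ β ∈ B, G (α + β) ≤ U) {a b : g}
    (ha : a ∈ ⨆ α ∈ A, G α) (hb : b ∈ ⨆ β ∈ B, G β) : ⁅a, b⁆ ∈ U := by
  let f : g →ₗ[k] g →ₗ[k] g := LieModule.toEnd k g g
  have hmap : Submodule.map₂ f (⨆ α ∈ A, G α) (⨆ β ∈ B, G β) ≤ U := by
    simp only [Submodule.map₂_iSup_left, Submodule.map₂_iSup_right, iSup_le_iff,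
      Submodule.map₂_le]
    intro β hβ α hα a ha b hb
    exact hAB α hα β hβ (hbr α β a b ha hb)
  exact hmap (Submodule.apply_mem_map₂ f ha hb)

lemma mul_mem_gradedCoeffSub {G : Q → Submodule k g}
    (hbr : ∀ (α β : Q) (a b : g), a ∈ G α → b ∈ G β → ⁅a, b⁆ ∈ G (α + β))
    {A B C : ℤ → Set Q}
    (hABC : ∀ i j, ∀ α ∈ A i, ∀ β ∈ B j, G (α + β) ≠ ⊥ → α + β ∈ C (i + j))
    {v w : HahnSeries ℤ g} (hv : v ∈ gradedCoeffSub G A) (hw : w ∈ gradedCoeffSub G B) :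
    v * w ∈ gradedCoeffSub G C := by
  refine mul_mem_coeffSub (fun i j a ha b hb => lie_mem_of_mem_biSup hbr ?_ ha hb) hv hw
  intro α hα β hβ
  by_cases h : G (α + β) = ⊥
  · exact h ▸ bot_le
  · exact le_iSup₂ (f := fun γ (_ : γ ∈ C (i + j)) => G γ) _ (hABC i j α hα β hβ h)

lemma MP_eq_gradedCoeffSub (G : Q → Submodule k g) (x : Q →+ ℝ) (r : ℝ) :
    MP G x r = gradedCoeffSub G fun i => {α | r ≤ x α + i} := rfl

lemma MPplus_eq_gradedCoeffSub (G : Q → Submodule k g) (x : Q →+ ℝ) (r : ℝ) :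
    MPplus G x r = gradedCoeffSub G fun i => {α | r < x α + i} := rfl

lemma borelminus_eq_biSup (G : Q → Submodule k g) (Φplus : Finset Q) :
    borelminus G Φplus = ⨆ α ∈ {α | α = 0 ∨ -α ∈ Φplus}, G α := by
  simp only [borelminus, Set.mem_ofPred_eq, iSup_or, iSup_sup_eq, iSup_iSup_eq_left]
  congr 1
  rw [← (Equiv.neg Q).iSup_comp]
  simp

lemma bInt_eq_gradedCoeffSub (G : Q → Submodule k g) (Φplus : Finset Q) :
    bInt G Φplus = gradedCoeffSub G fun i => {α | 0 ≤ i ∧ (α = 0 ∨ -α ∈ Φplus)} := by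
  rw [bInt, gradedCoeffSub]
  congr 1
  funext i
  split_ifs with hi
  · simp [not_le.mpr hi]
  · simp [not_lt.mp hi, borelminus_eq_biSup]

end Graded

section Heights

variable {Q : Type*} [AddCommGroup Q] {Φplus : Finset Q} {ht : Q →+ ℤ}

/-- The pairs `(α, i)` carrying the `t^i`-coefficients of `𝔟⁻[[t]]_s`. -/
def borelIdx (Φplus : Finset Q) (ht : Q →+ ℤ) (s : ℚ) (i : ℤ) : Set Q :=
  {α | (s : ℝ) - 1 < s * ht α + i ∧ 0 ≤ i ∧ (α = 0 ∨ -α ∈ Φplus)}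

/-- The pairs `(β, i)` carrying the `t^i`-coefficients of `𝔫((t))_s`. -/
def nilIdx (Φplus : Finset Q) (ht : Q →+ ℤ) (s : ℚ) (i : ℤ) : Set Q :=
  {β | 0 ≤ (s : ℝ) * ht β + i ∧ β ∈ Φplus}

lemma bIntS_eq_gradedCoeffSub {k : Type*} [Field k] {g : Type*} [LieRing g] [LieAlgebra k g]
    {G : Q → Submodule k g} (hG : iSupIndep G) (Φplus : Finset Q) (ht : Q →+ ℤ) (s : ℚ) :
    bIntS G Φplus ht s = gradedCoeffSub G (borelIdx Φplus ht s) := by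
  rw [bIntS, MPplus_eq_gradedCoeffSub, bInt_eq_gradedCoeffSub, gradedCoeffSub_inf hG]
  rfl

lemma nLoopS_eq_gradedCoeffSub {k : Type*} [Field k] {g : Type*} [LieRing g] [LieAlgebra k g]
    {G : Q → Submodule k g} (hG : iSupIndep G) (Φplus : Finset Q) (ht : Q →+ ℤ) (s : ℚ) :
    nLoopS G Φplus ht s = gradedCoeffSub G (nilIdx Φplus ht s) := by
  rw [nLoopS, MP_eq_gradedCoeffSub, nLoop_eq_gradedCoeffSub, gradedCoeffSub_inf hG]
  rfl

variable (hht : ∀ α ∈ Φplus, 1 ≤ ht α)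
include hht

lemma ht_nonpos {α : Q} (hα : α = 0 ∨ -α ∈ Φplus) : ht α ≤ 0 := by
  rcases hα with rfl | hα
  · simp
  · have := hht _ hα
    rw [map_neg] at this
    omega

lemma add_notMem_of_mem_borelIdx {s : ℚ} {i j : ℤ} {α β : Q}
    (hα : α ∈ borelIdx Φplus ht s i) (hβ : β ∈ borelIdx Φplus ht s j) : α + β ∉ Φplus := by
  intro h
  have := hht _ h
  rw [map_add] at this
  linarith [ht_nonpos hht hα.2.2, ht_nonpos hht hβ.2.2]

lemma not_eq_zero_or_neg_mem_of_mem_nilIdx {s : ℚ} {i j : ℤ} {α β : Q}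
    (hα : α ∈ nilIdx Φplus ht s i) (hβ : β ∈ nilIdx Φplus ht s j) :
    ¬(α + β = 0 ∨ -(α + β) ∈ Φplus) := by
  intro h
  have := ht_nonpos hht h
  rw [map_add] at this
  linarith [hht _ hα.2, hht _ hβ.2]

omit hht in
lemma add_mem_borelIdx {s : ℚ} (hs : 1 ≤ (s : ℝ)) {i j : ℤ} {α β : Q}
    (hα : α ∈ borelIdx Φplus ht s i) (hβ : β ∈ borelIdx Φplus ht s j)
    (hαβ : α + β = 0 ∨ -(α + β) ∈ Φplus) : α + β ∈ borelIdx Φplus ht s (i + j) := by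
  refine ⟨?_, add_nonneg hα.2.1 hβ.2.1, hαβ⟩
  push_cast [map_add]
  linarith [hα.1, hβ.1]

omit hht in
lemma add_mem_nilIdx {s : ℚ} {i j : ℤ} {α β : Q}
    (hα : α ∈ nilIdx Φplus ht s i) (hβ : β ∈ nilIdx Φplus ht s j) (hαβ : α + β ∈ Φplus) :
    α + β ∈ nilIdx Φplus ht s (i + j) := by
  refine ⟨?_, hαβ⟩
  push_cast [map_add]
  linarith [hα.1, hβ.1]

variable {s s' : ℚ} (hs' : 1 ≤ (s' : ℝ)) (hss' : (s : ℝ) ≤ s')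
include hs' hss'

lemma add_mem_nilIdx_of_mem_borelIdx {i j : ℤ} {α β : Q}
    (hα : α ∈ borelIdx Φplus ht s' i) (hβ : β ∈ nilIdx Φplus ht s j) (hαβ : α + β ∈ Φplus) :
    α + β ∈ nilIdx Φplus ht s (i + j) := by
  refine ⟨?_, hαβ⟩
  have hhtα : (ht α : ℝ) ≤ 0 := by exact_mod_cast ht_nonpos hht hα.2.2
  push_cast [map_add]
  nlinarith [hα.1, hβ.1]

lemma add_mem_borelIdx_of_mem_nilIdx {i j : ℤ} {α β : Q}
    (hα : α ∈ borelIdx Φplus ht s' i) (hβ : β ∈ nilIdx Φplus ht s j)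
    (hαβ : α + β = 0 ∨ -(α + β) ∈ Φplus) : α + β ∈ borelIdx Φplus ht s' (i + j) := by
  have hhtβ : (1 : ℝ) ≤ ht β := by exact_mod_cast hht _ hβ.2
  have hhtαβ : (ht (α + β) : ℝ) ≤ 0 := by exact_mod_cast ht_nonpos hht hαβ
  have hlt : (s' : ℝ) - 1 < s' * ht (α + β) + (i + j) := by
    push_cast [map_add]
    nlinarith [hα.1, hβ.1]
  refine ⟨by exact_mod_cast hlt, ?_, hαβ⟩
  have hpos : ((-1 : ℤ) : ℝ) < (i + j : ℤ) := by push_cast; nlinarith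
  have := Int.cast_lt.mp hpos
  omega

lemma add_mem_borelIdx_sup_nilIdx {i j : ℤ} {α β : Q}
    (hα : α ∈ (borelIdx Φplus ht s' ⊔ nilIdx Φplus ht s) i)
    (hβ : β ∈ (borelIdx Φplus ht s' ⊔ nilIdx Φplus ht s) j)
    (hαβ : α + β ∈ Φplus ∨ α + β = 0 ∨ -(α + β) ∈ Φplus) :
    α + β ∈ (borelIdx Φplus ht s' ⊔ nilIdx Φplus ht s) (i + j) := by
  have mixed : ∀ {i j : ℤ} {α β : Q}, α ∈ borelIdx Φplus ht s' i → β ∈ nilIdx Φplus ht s j →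
      α + β ∈ Φplus ∨ α + β = 0 ∨ -(α + β) ∈ Φplus →
      α + β ∈ (borelIdx Φplus ht s' ⊔ nilIdx Φplus ht s) (i + j) := by
    rintro i j α β hα hβ (h | h)
    · exact Or.inr (add_mem_nilIdx_of_mem_borelIdx hht hs' hss' hα hβ h)
    · exact Or.inl (add_mem_borelIdx_of_mem_nilIdx hht hs' hss' hα hβ h)
  rcases hα with hα | hα <;> rcases hβ with hβ | hβ
  · exact Or.inl (add_mem_borelIdx hs' hα hβ
      (hαβ.resolve_left (add_notMem_of_mem_borelIdx hht hα hβ)))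
  · exact mixed hα hβ hαβ
  · rw [add_comm α β, add_comm i j]
    exact mixed hβ hα (add_comm α β ▸ hαβ)
  · exact Or.inr (add_mem_nilIdx hα hβ
      (hαβ.resolve_right (not_eq_zero_or_neg_mem_of_mem_nilIdx hht hα hβ)))

end Heights

theorem borel_nilpotent_sum_subalgebra_general
    {k : Type*} [Field k] {g : Type*} [LieRing g] [LieAlgebra k g]
    {Q : Type*} [AddCommGroup Q] [DecidableEq Q]
    (Φplus : Finset Q)
    (Φ : Finset Q) (hΦ : ∀ α : Q, α ∈ Φ ↔ (α ∈ Φplus ∨ -α ∈ Φplus))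
    (G : Q → Submodule k g)
    (hsupp : ∀ α : Q, α ∉ Φ → α ≠ 0 → G α = ⊥)
    (hdec : DirectSum.IsInternal G)
    (hbr : ∀ (α β : Q) (a b : g), a ∈ G α → b ∈ G β → ⁅a, b⁆ ∈ G (α + β))
    (ht : Q →+ ℤ) (hht : ∀ α ∈ Φplus, 1 ≤ ht α)
    (s s' : ℚ) (hs : 1 ≤ s) (hss' : s ≤ s') :
    (∀ v ∈ bIntS G Φplus ht s', ∀ w ∈ nLoopS G Φplus ht s,
        v * w ∈ bIntS G Φplus ht s' ⊔ nLoopS G Φplus ht s) ∧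
    (∀ v ∈ bIntS G Φplus ht s' ⊔ nLoopS G Φplus ht s,
      ∀ w ∈ bIntS G Φplus ht s' ⊔ nLoopS G Φplus ht s,
        v * w ∈ bIntS G Φplus ht s' ⊔ nLoopS G Φplus ht s) := by
  have hroot : ∀ γ, G γ ≠ ⊥ → γ ∈ Φplus ∨ γ = 0 ∨ -γ ∈ Φplus := fun γ hγ => by
    by_contra h
    exact hγ (hsupp γ (by rw [hΦ]; tauto) (by tauto))
  have hs' : (1 : ℝ) ≤ s' := by exact_mod_cast hs.trans hss'
  have hss : (s : ℝ) ≤ s' := by exact_mod_cast hss'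
  have hsum : bIntS G Φplus ht s' ⊔ nLoopS G Φplus ht s =
      gradedCoeffSub G (borelIdx Φplus ht s' ⊔ nilIdx Φplus ht s) := by
    rw [bIntS_eq_gradedCoeffSub hdec.submodule_iSupIndep,
      nLoopS_eq_gradedCoeffSub hdec.submodule_iSupIndep, gradedCoeffSub_sup]
  have hclosed : ∀ v ∈ bIntS G Φplus ht s' ⊔ nLoopS G Φplus ht s,
      ∀ w ∈ bIntS G Φplus ht s' ⊔ nLoopS G Φplus ht s,
        v * w ∈ bIntS G Φplus ht s' ⊔ nLoopS G Φplus ht s := by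
    rw [hsum]
    exact fun v hv w hw => mul_mem_gradedCoeffSub hbr
      (fun _ _ _ hα _ hβ hne => add_mem_borelIdx_sup_nilIdx hht hs' hss hα hβ (hroot _ hne)) hv hw
  exact ⟨fun v hv w hw => hclosed v (Submodule.mem_sup_left hv) w (Submodule.mem_sup_right hw),
    hclosed⟩

/-- For rationals `s' ≥ s ≥ 1`, one has
`[𝔟⁻[[t]]_{s'}, 𝔫((t))_s] ⊆ 𝔟⁻[[t]]_{s'} + 𝔫((t))_s` in `𝔤((t)) = HahnSeries ℤ 𝔤`
(bracket = the multiplication `v * w`); in particular `𝔟⁻[[t]]_{s'} + 𝔫((t))_s` is a Lie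
subalgebra of `𝔤((t))`. -/
theorem borel_nilpotent_sum_subalgebra
    {k : Type*} [Field k] {g : Type*} [LieRing g] [LieAlgebra k g]
    {Q : Type*} [AddCommGroup Q] [DecidableEq Q]
    (Φplus : Finset Q) (hΦplus : (0 : Q) ∉ Φplus)
    (Φ : Finset Q) (hΦ : ∀ α : Q, α ∈ Φ ↔ (α ∈ Φplus ∨ -α ∈ Φplus))
    (hdisj : ∀ α ∈ Φplus, -α ∉ Φplus)
    (G : Q → Submodule k g)
    (hsupp : ∀ α : Q, α ∉ Φ → α ≠ 0 → G α = ⊥)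
    (hdec : DirectSum.IsInternal G)
    (hbr : ∀ (α β : Q) (a b : g), a ∈ G α → b ∈ G β → ⁅a, b⁆ ∈ G (α + β))
    (ht : Q →+ ℤ) (hht : ∀ α ∈ Φplus, 1 ≤ ht α)
    (s s' : ℚ) (hs : 1 ≤ s) (hss' : s ≤ s') :
    (∀ v ∈ bIntS G Φplus ht s', ∀ w ∈ nLoopS G Φplus ht s,
        v * w ∈ bIntS G Φplus ht s' ⊔ nLoopS G Φplus ht s) ∧
    (∀ v ∈ bIntS G Φplus ht s' ⊔ nLoopS G Φplus ht s,
      ∀ w ∈ bIntS G Φplus ht s' ⊔ nLoopS G Φplus ht s,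
        v * w ∈ bIntS G Φplus ht s' ⊔ nLoopS G Φplus ht s) :=
  borel_nilpotent_sum_subalgebra_general Φplus Φ hΦ G hsupp hdec hbr ht hht s s' hs hss'
end

section
/- Let s be a rational number with s ≥ 1. Then [𝔟⁻[[t]]_s, 𝔫((t))_s] ∩ 𝔫((t)) ⊆ 𝔫[[t]] + (⨁_{α ∈ Φ⁺, ht(α) ≥ 2} 𝔤_α) ⊗ k((t)). -/
open HahnSeries

/-! The bracket adds Moy–Prasad levels, so `[𝔟⁻[[t]]_s, 𝔫((t))_s] ⊆ 𝔨_{s·ht,(s−1)+}`. A root `γ`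
contributing to a `t^i`-coefficient with `i < 0` then satisfies `s·ht(γ) > s − 1 − i ≥ s`, hence
`ht(γ) ≥ 2` (and `γ ∈ Φ⁺`, since `G γ = 0` otherwise); the coefficients with `i ≥ 0` lie in `𝔫`
because the element lies in `𝔫((t))`. -/

section MoyPrasad

variable {k : Type*} [Field k] {g : Type*} [LieRing g] [LieAlgebra k g]
variable {Q : Type*} [AddCommGroup Q]

theorem lie_mem_biSup_of_add_mem {G : Q → Submodule k g}
    (hbr : ∀ (α β : Q) (a b : g), a ∈ G α → b ∈ G β → ⁅a, b⁆ ∈ G (α + β))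
    {S T U : Set Q} (hST : ∀ α ∈ S, ∀ β ∈ T, α + β ∈ U)
    {a b : g} (ha : a ∈ ⨆ α ∈ S, G α) (hb : b ∈ ⨆ β ∈ T, G β) :
    ⁅a, b⁆ ∈ ⨆ γ ∈ U, G γ := by
  let bracket : g →ₗ[k] g →ₗ[k] g :=
    LinearMap.mk₂ k (fun a b => ⁅a, b⁆) add_lie smul_lie lie_add lie_smul
  have hle : Submodule.map₂ bracket (⨆ α ∈ S, G α) (⨆ β ∈ T, G β) ≤ ⨆ γ ∈ U, G γ := by
    simp only [Submodule.map₂_iSup_left, Submodule.map₂_iSup_right]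
    refine iSup₂_le fun β hβ => iSup₂_le fun α hα => ?_
    refine (Submodule.map₂_le.mpr fun x hx y hy => ?_).trans
      (le_iSup₂_of_le (α + β) (hST α hα β hβ) le_rfl)
    rw [LinearMap.mk₂_apply]
    exact hbr α β x y hx hy
  exact hle (Submodule.apply_mem_map₂ bracket ha hb)

theorem mul_mem_MPplus {G : Q → Submodule k g}
    (hbr : ∀ (α β : Q) (a b : g), a ∈ G α → b ∈ G β → ⁅a, b⁆ ∈ G (α + β))
    {x : Q →+ ℝ} {r r' : ℝ} {v w : HahnSeries ℤ g} (hv : v ∈ MPplus G x r) (hw : w ∈ MP G x r') :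
    v * w ∈ MPplus G x (r + r') := by
  intro i
  rw [HahnSeries.coeff_mul]
  refine Submodule.sum_mem _ fun ⟨j, l⟩ hjl => ?_
  have hjl : j + l = i := (Finset.mem_antidiagonal.mp hjl).2.2
  refine lie_mem_biSup_of_add_mem hbr (fun α hα β hβ => ?_) (hv j) (hw l)
  simp only [Set.mem_ofPred_eq, map_add, ← hjl, Int.cast_add] at hα hβ ⊢
  linarith

theorem coeffSub_sup_le (B C : ℤ → Submodule k g) :
    coeffSub (fun i => B i ⊔ C i) ≤ coeffSub B ⊔ coeffSub C := by
  intro v hv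
  -- `b i = 0` off the support of `v`, so that `b` is again a Hahn series
  have hsplit : ∀ i, ∃ b ∈ B i, v.coeff i - b ∈ C i ∧ (v.coeff i = 0 → b = 0) := by
    intro i
    by_cases h0 : v.coeff i = 0
    · exact ⟨0, zero_mem _, by simp [h0], fun _ => rfl⟩
    · obtain ⟨b, hb, c, hc, hbc⟩ := Submodule.mem_sup.mp (hv i)
      exact ⟨b, hb, by rwa [← hbc, add_sub_cancel_left], fun h => absurd h h0⟩
  choose b hbB hbC hb0 using hsplit
  have hsupp : Function.support b ⊆ Function.support v.coeff :=
    fun i hi h => hi (hb0 i h)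
  let vB : HahnSeries ℤ g := ⟨b, v.isPWO_support'.mono hsupp⟩
  refine Submodule.mem_sup.mpr ⟨vB, hbB, v - vB, fun i => ?_, add_sub_cancel vB v⟩
  simpa only [HahnSeries.coeff_sub] using hbC i

theorem two_le_of_sub_one_lt_mul_add {s : ℝ} (hs : 0 < s) {h i : ℤ} (hi : i < 0)
    (hlt : s - 1 < s * h + i) : 2 ≤ h := by
  by_contra! h_le
  have hh : (h : ℝ) ≤ 1 := by exact_mod_cast Int.lt_add_one_iff.mp h_le
  have hi' : (i : ℝ) ≤ -1 := by exact_mod_cast Int.le_sub_one_of_lt hi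
  nlinarith

theorem rootSpace_le_iSup_two_le_ht {Φplus Φ : Finset Q}
    (hΦ : ∀ α : Q, α ∈ Φ → α ∈ Φplus ∨ -α ∈ Φplus) {G : Q → Submodule k g}
    (hsupp : ∀ α : Q, α ∉ Φ → α ≠ 0 → G α = ⊥) {ht : Q →+ ℤ} (hht : ∀ α ∈ Φplus, 1 ≤ ht α)
    {γ : Q} (hγ : 2 ≤ ht γ) :
    G γ ≤ ⨆ α ∈ Φplus, ⨆ _ : 2 ≤ ht α, G α := by
  by_cases hγΦplus : γ ∈ Φplus
  · exact le_iSup₂_of_le γ hγΦplus (le_iSup_of_le hγ le_rfl)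
  have hγ0 : γ ≠ 0 := by
    rintro rfl
    simp at hγ
  have hγΦ : γ ∉ Φ := fun hmem => (hΦ γ hmem).elim hγΦplus fun hneg => by
    have := hht _ hneg
    rw [map_neg] at this
    omega
  simp [hsupp γ hγΦ hγ0]

end MoyPrasad

theorem whittaker_character_extension_lie_general
    {k : Type*} [Field k] {g : Type*} [LieRing g] [LieAlgebra k g]
    {Q : Type*} [AddCommGroup Q]
    (Φplus : Finset Q)
    (Φ : Finset Q) (hΦ : ∀ α : Q, α ∈ Φ ↔ (α ∈ Φplus ∨ -α ∈ Φplus))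
    (G : Q → Submodule k g)
    (hsupp : ∀ α : Q, α ∉ Φ → α ≠ 0 → G α = ⊥)
    (hbr : ∀ (α β : Q) (a b : g), a ∈ G α → b ∈ G β → ⁅a, b⁆ ∈ G (α + β))
    (ht : Q →+ ℤ) (hht : ∀ α ∈ Φplus, 1 ≤ ht α)
    (s : ℚ) (hs : 1 ≤ s) :
    Submodule.span k {u : HahnSeries ℤ g |
        ∃ v ∈ bIntS G Φplus ht s, ∃ w ∈ nLoopS G Φplus ht s, u = v * w} ⊓ nLoop G Φplus ≤
      nInt G Φplus ⊔ coeffSub (fun _ => ⨆ α ∈ Φplus, ⨆ _ : 2 ≤ ht α, G α) := by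
  rintro u ⟨hspan, hn⟩
  have hs0 : (0 : ℝ) < s := by exact_mod_cast zero_lt_one.trans_le hs
  have hu : u ∈ MPplus G (sht ht s) ((s : ℝ) - 1 + 0) := by
    refine Submodule.span_le.mpr ?_ hspan
    rintro _ ⟨v, hv, w, hw, rfl⟩
    exact mul_mem_MPplus hbr hv.1 hw.1
  refine coeffSub_sup_le (fun i => if i < 0 then ⊥ else nilpos G Φplus) _ fun i => ?_
  by_cases hi : i < 0
  · simp only [if_pos hi, bot_sup_eq]
    have hlevel : (⨆ γ ∈ {γ | (s : ℝ) - 1 + 0 < sht ht s γ + i}, G γ) ≤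
        ⨆ α ∈ Φplus, ⨆ _ : 2 ≤ ht α, G α := by
      refine iSup₂_le fun γ hγ => rootSpace_le_iSup_two_le_ht (fun α => (hΦ α).mp) hsupp hht ?_
      refine two_le_of_sub_one_lt_mul_add hs0 hi ?_
      simpa [sht] using hγ
    exact hlevel (hu i)
  · simp only [if_neg hi]
    exact Submodule.mem_sup_left (hn i)

/-- For a rational `s ≥ 1`,
`[𝔟⁻[[t]]_s, 𝔫((t))_s] ∩ 𝔫((t)) ⊆ 𝔫[[t]] + (⨁_{α ∈ Φ⁺, ht(α) ≥ 2} 𝔤_α) ⊗ k((t))`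
inside `𝔤((t)) = HahnSeries ℤ 𝔤`, where `[𝔟⁻[[t]]_s, 𝔫((t))_s]` is the span of the
brackets (= products `v * w`) of elements of the two subspaces. -/
theorem whittaker_character_extension_lie
    {k : Type*} [Field k] {g : Type*} [LieRing g] [LieAlgebra k g]
    {Q : Type*} [AddCommGroup Q] [DecidableEq Q]
    (Φplus : Finset Q) (hΦplus : (0 : Q) ∉ Φplus)
    (Φ : Finset Q) (hΦ : ∀ α : Q, α ∈ Φ ↔ (α ∈ Φplus ∨ -α ∈ Φplus))
    (hdisj : ∀ α ∈ Φplus, -α ∉ Φplus)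
    (G : Q → Submodule k g)
    (hsupp : ∀ α : Q, α ∉ Φ → α ≠ 0 → G α = ⊥)
    (hdec : DirectSum.IsInternal G)
    (hbr : ∀ (α β : Q) (a b : g), a ∈ G α → b ∈ G β → ⁅a, b⁆ ∈ G (α + β))
    (ht : Q →+ ℤ) (hht : ∀ α ∈ Φplus, 1 ≤ ht α)
    (s : ℚ) (hs : 1 ≤ s) :
    Submodule.span k {u : HahnSeries ℤ g |
        ∃ v ∈ bIntS G Φplus ht s, ∃ w ∈ nLoopS G Φplus ht s, u = v * w} ⊓ nLoop G Φplus ≤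
      nInt G Φplus ⊔ coeffSub (fun _ => ⨆ α ∈ Φplus, ⨆ _ : 2 ≤ ht α, G α) :=
  whittaker_character_extension_lie_general Φplus Φ hΦ G hsupp hbr ht hht s hs
end
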